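/- arXiv:1908.04815 — 5 statements merged into one kernel-verified Lean document; each statement's English description precedes it below -/
import Mathlib

section
/- For α > 1/2 and a > 0, define I_α(a) = ∫_a^∞ (1+r²)^{−α} dr. Then for every α > 1/2 and every a > 0, I_α(a) = a · Σ_{k=0}^{∞} [ 1/(2α+2k−1) ] · ( ∏_{i=0}^{k−1} (2α+2i)/(2α+2i−1) ) · (1+a²)^{−(α+k)}, where the empty product (k = 0) equals 1, and the series on the right-hand side converges. -/
/-!
Integrating `d/dr [r (1+r²)^{-β}] = (1-2β)(1+r²)^{-β} + 2β(1+r²)^{-β-1}` over `(a, ∞)` gives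
`I_β(a) = a (1+a²)^{-β}/(2β-1) + 2β/(2β-1) · I_{β+1}(a)`. Iterating this `n` times from `β = α`
yields the first `n` terms of the series plus the remainder `P_n I_{α+n}(a)`, `P_n` being the
product. As `(1+r²)^{-n} ≤ (1+a²)^{-n}` on `(a, ∞)`, the remainder is `O(n · tₙ)` for the `n`-th
term `tₙ`, and the terms decay geometrically with ratio at most `(1+a²)⁻¹ < 1`.
-/

open MeasureTheory

/-- `I_α(a) = ∫_a^∞ (1+r²)^{−α} dr`. -/
noncomputable def Iint (α a : ℝ) : ℝ := ∫ r in Set.Ioi a, (1 + r ^ 2) ^ (-α)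

open Set Filter Real Topology

lemma integrable_one_add_sq_rpow_neg {β : ℝ} (hβ : 1 / 2 < β) :
    Integrable fun r : ℝ => (1 + r ^ 2) ^ (-β) := by
  have h := integrable_rpow_neg_one_add_norm_sq (E := ℝ) (μ := volume) (r := 2 * β)
    (by rw [Module.finrank_self]; push_cast; linarith)
  simpa only [Real.norm_eq_abs, sq_abs, neg_div, mul_div_cancel_left₀ β two_ne_zero] using h

lemma hasDerivAt_mul_one_add_sq_rpow_neg (β r : ℝ) :
    HasDerivAt (fun s : ℝ => s * (1 + s ^ 2) ^ (-β))
      ((1 - 2 * β) * (1 + r ^ 2) ^ (-β) + 2 * β * (1 + r ^ 2) ^ (-(β + 1))) r := by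
  have hpos : 0 < 1 + r ^ 2 := by positivity
  have hsq : HasDerivAt (fun s : ℝ => 1 + s ^ 2) (2 * r) r := by
    simpa using (hasDerivAt_pow 2 r).const_add 1
  refine ((hasDerivAt_id r).mul (hsq.rpow_const (p := -β) (Or.inl hpos.ne'))).congr_deriv ?_
  have hsplit : (1 + r ^ 2) ^ (-β) = (1 + r ^ 2) ^ (-(β + 1)) * (1 + r ^ 2) := by
    rw [← rpow_add_one hpos.ne']; ring_nf
  rw [show -β - 1 = -(β + 1) by ring, hsplit, id]
  ring

lemma tendsto_mul_one_add_sq_rpow_neg {β : ℝ} (hβ : 1 / 2 < β) :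
    Tendsto (fun r : ℝ => r * (1 + r ^ 2) ^ (-β)) atTop (𝓝 0) := by
  have hbound (r : ℝ) (hr : 0 < r) : r * (1 + r ^ 2) ^ (-β) ≤ r ^ (-(2 * β - 1)) :=
    calc r * (1 + r ^ 2) ^ (-β) ≤ r * (r ^ 2) ^ (-β) :=
          mul_le_mul_of_nonneg_left
            (rpow_le_rpow_of_nonpos (by positivity) (by linarith) (by linarith)) hr.le
      _ = r ^ (-(2 * β - 1)) := by
          rw [show -(2 * β - 1) = 1 + 2 * -β by ring, rpow_add hr, rpow_one, rpow_mul hr.le]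
          norm_num
  refine squeeze_zero' ?_ ?_ (tendsto_rpow_neg_atTop (y := 2 * β - 1) (by linarith))
  · filter_upwards [eventually_ge_atTop 0] with r hr using by positivity
  · filter_upwards [eventually_gt_atTop 0] with r hr using hbound r hr

lemma Iint_nonneg (β a : ℝ) : 0 ≤ Iint β a :=
  setIntegral_nonneg measurableSet_Ioi fun r _ => rpow_nonneg (by positivity) _

lemma Iint_eq_add_Iint_add_one {β : ℝ} (hβ : 1 / 2 < β) (a : ℝ) :
    Iint β a = a * (1 + a ^ 2) ^ (-β) / (2 * β - 1) + 2 * β / (2 * β - 1) * Iint (β + 1) a := by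
  have hg := (integrable_one_add_sq_rpow_neg hβ).integrableOn (s := Ioi a)
  have hg₁ := (integrable_one_add_sq_rpow_neg (β := β + 1) (by linarith)).integrableOn (s := Ioi a)
  have hftc := integral_Ioi_of_hasDerivAt_of_tendsto'
    (fun r _ => hasDerivAt_mul_one_add_sq_rpow_neg β r) ((hg.const_mul _).add (hg₁.const_mul _))
    (tendsto_mul_one_add_sq_rpow_neg hβ)
  rw [integral_add (hg.const_mul _) (hg₁.const_mul _), integral_const_mul,
    integral_const_mul] at hftc
  change (1 - 2 * β) * Iint β a + 2 * β * Iint (β + 1) a = 0 - a * (1 + a ^ 2) ^ (-β) at hftc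
  have hne : 2 * β - 1 ≠ 0 := by linarith
  rw [div_mul_eq_mul_div, ← add_div, eq_div_iff hne]
  linarith

lemma Iint_add_le {β s a : ℝ} (hβ : 1 / 2 < β) (ha : 0 ≤ a) (hs : 0 ≤ s) :
    Iint (β + s) a ≤ (1 + a ^ 2) ^ (-s) * Iint β a := by
  have hg := (integrable_one_add_sq_rpow_neg hβ).integrableOn (s := Ioi a)
  have hgs := (integrable_one_add_sq_rpow_neg (β := β + s) (by linarith)).integrableOn (s := Ioi a)
  rw [Iint, Iint, ← integral_const_mul]
  refine setIntegral_mono_on hgs (hg.const_mul _) measurableSet_Ioi fun r (hr : a < r) => ?_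
  have hpos : 0 < 1 + r ^ 2 := by positivity
  rw [show -(β + s) = -s + -β by ring, rpow_add hpos]
  exact mul_le_mul_of_nonneg_right
    (rpow_le_rpow_of_nonpos (by positivity) (by nlinarith) (by linarith)) (rpow_nonneg hpos.le _)

lemma inv_one_add_sq_lt_one {a : ℝ} (ha : a ≠ 0) : (1 + a ^ 2)⁻¹ < 1 :=
  inv_lt_one_of_one_lt₀ (lt_add_of_pos_right 1 (by positivity))

namespace Iint

noncomputable def coeff (α : ℝ) (k : ℕ) : ℝ :=
  ∏ i ∈ Finset.range k, (2 * α + 2 * (i : ℝ)) / (2 * α + 2 * (i : ℝ) - 1)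

noncomputable def term (α a : ℝ) (k : ℕ) : ℝ :=
  1 / (2 * α + 2 * (k : ℝ) - 1) * coeff α k * (1 + a ^ 2) ^ (-(α + (k : ℝ)))

variable {α : ℝ}

lemma coeff_succ (α : ℝ) (k : ℕ) :
    coeff α (k + 1) = coeff α k * ((2 * α + 2 * k) / (2 * α + 2 * k - 1)) :=
  Finset.prod_range_succ _ _

lemma coeff_nonneg (hα : 1 / 2 < α) (k : ℕ) : 0 ≤ coeff α k :=
  Finset.prod_nonneg fun i _ => div_nonneg (by linarith [i.cast_nonneg (α := ℝ)])
    (by linarith [i.cast_nonneg (α := ℝ)])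

lemma term_nonneg (hα : 1 / 2 < α) (a : ℝ) (k : ℕ) : 0 ≤ term α a k :=
  mul_nonneg (mul_nonneg (one_div_nonneg.2 (by linarith [k.cast_nonneg (α := ℝ)]))
    (coeff_nonneg hα k)) (rpow_nonneg (by positivity) _)

lemma term_succ (α a : ℝ) (k : ℕ) :
    term α a (k + 1) = (2 * α + 2 * k) / (2 * α + 2 * k + 1) * (1 + a ^ 2)⁻¹ * term α a k := by
  rw [term, term, coeff_succ, Nat.cast_succ, show -(α + (k + 1 : ℝ)) = -(α + k) + -1 by ring,
    rpow_add (by positivity), rpow_neg_one,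
    show 2 * α + 2 * ((k : ℝ) + 1) - 1 = 2 * α + 2 * k + 1 by ring]
  field_simp

lemma term_succ_le (hα : 1 / 2 < α) (a : ℝ) (k : ℕ) :
    term α a (k + 1) ≤ (1 + a ^ 2)⁻¹ * term α a k := by
  have hk := k.cast_nonneg (α := ℝ)
  have hterm := term_nonneg hα a k
  rw [term_succ]
  calc (2 * α + 2 * k) / (2 * α + 2 * k + 1) * (1 + a ^ 2)⁻¹ * term α a k
      ≤ 1 * (1 + a ^ 2)⁻¹ * term α a k := by
        gcongr
        exact (div_le_one (by linarith)).2 (by linarith)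
    _ = (1 + a ^ 2)⁻¹ * term α a k := by rw [one_mul]

lemma term_le_geometric (hα : 1 / 2 < α) (a : ℝ) (n : ℕ) :
    term α a n ≤ ((1 + a ^ 2)⁻¹) ^ n * term α a 0 :=
  le_geom (by positivity) n fun k _ => term_succ_le hα a k

lemma summable_term (hα : 1 / 2 < α) {a : ℝ} (ha : a ≠ 0) : Summable (term α a) :=
  .of_nonneg_of_le (term_nonneg hα a) (term_le_geometric hα a)
    ((summable_geometric_of_lt_one (by positivity) (inv_one_add_sq_lt_one ha)).mul_right _)

lemma tendsto_linear_mul_term (hα : 1 / 2 < α) {a : ℝ} (ha : a ≠ 0) :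
    Tendsto (fun n : ℕ => (2 * α + 2 * n - 1) * term α a n) atTop (𝓝 0) := by
  set q := (1 + a ^ 2)⁻¹
  have hq₀ : 0 ≤ q := by positivity
  have hq₁ : q < 1 := inv_one_add_sq_lt_one ha
  have hlin (n : ℕ) : 0 ≤ 2 * α + 2 * n - 1 := by linarith [n.cast_nonneg (α := ℝ)]
  have hgeom : Tendsto (fun n : ℕ => ((2 * α - 1) * q ^ n + 2 * (n * q ^ n)) * term α a 0)
      atTop (𝓝 0) := by
    simpa using (((tendsto_pow_atTop_nhds_zero_of_lt_one hq₀ hq₁).const_mul (2 * α - 1)).add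
      ((tendsto_self_mul_const_pow_of_lt_one hq₀ hq₁).const_mul 2)).mul_const (term α a 0)
  refine squeeze_zero (fun n => mul_nonneg (hlin n) (term_nonneg hα a n)) (fun n => ?_) hgeom
  calc (2 * α + 2 * n - 1) * term α a n ≤ (2 * α + 2 * n - 1) * (q ^ n * term α a 0) :=
        mul_le_mul_of_nonneg_left (term_le_geometric hα a n) (hlin n)
    _ = ((2 * α - 1) * q ^ n + 2 * (n * q ^ n)) * term α a 0 := by ring

lemma eq_sum_add_coeff_mul (hα : 1 / 2 < α) (a : ℝ) (n : ℕ) :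
    Iint α a = a * ∑ k ∈ Finset.range n, term α a k + coeff α n * Iint (α + n) a := by
  induction n with
  | zero => simp [coeff]
  | succ n ih =>
    rw [ih, Iint_eq_add_Iint_add_one (β := α + n) (by linarith [n.cast_nonneg (α := ℝ)]) a,
      Finset.sum_range_succ, coeff_succ, term, Nat.cast_succ, ← add_assoc]
    field_simp
    ring

lemma coeff_mul_Iint_add_le (hα : 1 / 2 < α) {a : ℝ} (ha : 0 ≤ a) (n : ℕ) :
    coeff α n * Iint (α + n) a ≤
      (1 + a ^ 2) ^ α * Iint α a * ((2 * α + 2 * n - 1) * term α a n) := by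
  have hne : 2 * (α + n) - 1 ≠ 0 := by linarith [n.cast_nonneg (α := ℝ)]
  have hpos : 0 < 1 + a ^ 2 := by positivity
  calc coeff α n * Iint (α + n) a ≤ coeff α n * ((1 + a ^ 2) ^ (-(n : ℝ)) * Iint α a) :=
        mul_le_mul_of_nonneg_left (Iint_add_le hα ha n.cast_nonneg) (coeff_nonneg hα n)
    _ = _ := by
        rw [term, show -(α + n) = -α + -n by ring, rpow_add hpos, rpow_neg hpos.le α]
        field_simp

lemma tendsto_coeff_mul_Iint_add (hα : 1 / 2 < α) {a : ℝ} (ha : 0 < a) :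
    Tendsto (fun n : ℕ => coeff α n * Iint (α + n) a) atTop (𝓝 0) :=
  squeeze_zero (fun n => mul_nonneg (coeff_nonneg hα n) (Iint_nonneg _ _))
    (coeff_mul_Iint_add_le hα ha.le)
    (by simpa using (tendsto_linear_mul_term hα ha.ne').const_mul _)

end Iint

/-- The series expansion
`I_α(a) = a Σ_{k≥0} (2α+2k−1)⁻¹ (∏_{i<k} (2α+2i)/(2α+2i−1)) (1+a²)^{−(α+k)}`,
and the series converges. -/
theorem Iint_series (α a : ℝ) (hα : 1 / 2 < α) (ha : 0 < a) :
    Summable (fun k : ℕ => (1 / (2 * α + 2 * (k : ℝ) - 1))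
      * (∏ i ∈ Finset.range k, (2 * α + 2 * (i : ℝ)) / (2 * α + 2 * (i : ℝ) - 1))
      * (1 + a ^ 2) ^ (-(α + (k : ℝ)))) ∧
    Iint α a = a * ∑' k : ℕ, (1 / (2 * α + 2 * (k : ℝ) - 1))
      * (∏ i ∈ Finset.range k, (2 * α + 2 * (i : ℝ)) / (2 * α + 2 * (i : ℝ) - 1))
      * (1 + a ^ 2) ^ (-(α + (k : ℝ))) := by
  have hsum : Summable (Iint.term α a) := Iint.summable_term hα ha.ne'
  refine ⟨hsum, tendsto_nhds_unique ?_ (hsum.hasSum.tendsto_sum_nat.const_mul a)⟩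
  have hrem := tendsto_const_nhds (x := Iint α a) |>.sub (Iint.tendsto_coeff_mul_Iint_add hα ha)
  rw [sub_zero] at hrem
  exact hrem.congr fun n => by linarith [Iint.eq_sum_add_coeff_mul hα a n]
end

section
/- Let T < 0 be a real number and let n and q be nonnegative integers with n > 2q + 8. Define c_q = ∫_0^∞ (1+(t−T)²)^{(5+2q−n)/2} dt and c_{q+1} = ∫_0^∞ (1+(t−T)²)^{(5+2(q+1)−n)/2} dt. Then (1+T²) · (n−2q−7)/(n−2q−8) ≤ c_{q+1}/c_q ≤ (1+T²) · (n−2q−6)/(n−2q−8). -/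
/-!
After the substitution `u = t - T`, put `a = -T > 0`, `α = (n - 2q - 5)/2` and
`I(β) = ∫_a^∞ (1 + u²)^(-β) du`, so that `c_q = I(α)` and `c_{q+1} = I(α - 1)`.
Integrating the derivative of `u (1 + u²)^(1-α)` over `(a, ∞)` gives the exact recurrence
`(2α - 3) I(α - 1) = (2α - 2) I(α) + a (1 + a²)^(1-α)`, so everything reduces to comparing the
boundary term with `I(α)`. From below, `a ≤ u` on the range and `u (1 + u²)^(-α)` has an explicit
primitive, giving `(2α - 2) a² I(α) ≤ a (1 + a²)^(1-α)`. From above, the derivative of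
`-u (1 + u²)^(1-α) / (1 + (2α - 1) u²)` is `(1 + u²)^(-α)` minus a nonnegative function, giving
`a (1 + a²)^(1-α) ≤ (1 + (2α - 1) a²) I(α)`.
-/

open MeasureTheory Set Filter Topology Real

lemma setIntegral_Ioi_comp_sub_right (f : ℝ → ℝ) (b c : ℝ) :
    ∫ t in Ioi b, f (t - c) = ∫ u in Ioi (b - c), f u := by
  have h := (measurePreserving_sub_right volume c).setIntegral_preimage_emb
    (measurableEmbedding_subRight c) f (Ioi (b - c))
  rwa [preimage_sub_const_Ioi, sub_add_cancel] at h

lemma one_add_sq_rpow_one_sub (u α : ℝ) :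
    (1 + u ^ 2) ^ (1 - α) = (1 + u ^ 2) * (1 + u ^ 2) ^ (-α) := by
  rw [sub_eq_add_neg, rpow_add (by positivity), rpow_one]

lemma norm_mul_one_add_sq_rpow_le (u r : ℝ) :
    ‖u * (1 + u ^ 2) ^ r‖ ≤ (1 + u ^ 2) ^ (r + 1 / 2) := by
  have hP : 0 < 1 + u ^ 2 := by positivity
  rw [norm_mul, norm_of_nonneg (rpow_nonneg hP.le r), rpow_add hP, mul_comm, Real.norm_eq_abs,
    ← sqrt_eq_rpow]
  gcongr
  exact abs_le_sqrt (by linarith)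

lemma integrable_one_add_sq_rpow {r : ℝ} (hr : r < -1 / 2) :
    Integrable fun u : ℝ => (1 + u ^ 2) ^ r := by
  have h := integrable_rpow_neg_one_add_norm_sq (E := ℝ) (μ := volume) (r := -2 * r)
    (by simp only [Module.finrank_self, Nat.cast_one]; linarith)
  simpa [Real.norm_eq_abs, sq_abs] using h

lemma integrable_mul_one_add_sq_rpow {r : ℝ} (hr : r < -1) :
    Integrable fun u : ℝ => u * (1 + u ^ 2) ^ r :=
  (integrable_one_add_sq_rpow (r := r + 1 / 2) (by linarith)).mono' (by fun_prop)
    (Eventually.of_forall fun u => norm_mul_one_add_sq_rpow_le u r)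

lemma tendsto_one_add_sq_rpow_atTop {r : ℝ} (hr : r < 0) :
    Tendsto (fun u : ℝ => (1 + u ^ 2) ^ r) atTop (𝓝 0) := by
  have h := (tendsto_rpow_neg_atTop (neg_pos.mpr hr)).comp
    (tendsto_atTop_add_const_left atTop 1 (tendsto_pow_atTop two_ne_zero))
  simpa only [neg_neg, Function.comp_def] using h

lemma tendsto_mul_one_add_sq_rpow_atTop {r : ℝ} (hr : r < -1 / 2) :
    Tendsto (fun u : ℝ => u * (1 + u ^ 2) ^ r) atTop (𝓝 0) :=
  squeeze_zero_norm' (Eventually.of_forall fun u => norm_mul_one_add_sq_rpow_le u r)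
    (tendsto_one_add_sq_rpow_atTop (by linarith))

lemma hasDerivAt_one_add_sq_rpow_one_sub (α u : ℝ) :
    HasDerivAt (fun u : ℝ => (1 + u ^ 2) ^ (1 - α)) (2 * (1 - α) * u * (1 + u ^ 2) ^ (-α)) u := by
  have h := ((hasDerivAt_pow 2 u).const_add 1).rpow_const (p := 1 - α) (Or.inl (by positivity))
  convert h using 1
  rw [show 1 - α - 1 = -α by ring]
  push_cast
  ring

lemma hasDerivAt_mul_one_add_sq_rpow_one_sub (α u : ℝ) :
    HasDerivAt (fun u : ℝ => u * (1 + u ^ 2) ^ (1 - α))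
      ((3 - 2 * α) * (1 + u ^ 2) ^ (1 - α) + (2 * α - 2) * (1 + u ^ 2) ^ (-α)) u := by
  refine ((hasDerivAt_id u).mul (hasDerivAt_one_add_sq_rpow_one_sub α u)).congr_deriv ?_
  rw [id_eq, one_add_sq_rpow_one_sub u α]
  ring

lemma integral_Ioi_one_add_sq_rpow_recurrence {α : ℝ} (hα : 3 / 2 < α) (a : ℝ) :
    (2 * α - 3) * ∫ u in Ioi a, (1 + u ^ 2) ^ (1 - α)
      = (2 * α - 2) * (∫ u in Ioi a, (1 + u ^ 2) ^ (-α)) + a * (1 + a ^ 2) ^ (1 - α) := by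
  have h₁ := (integrable_one_add_sq_rpow (r := 1 - α) (by linarith)).integrableOn (s := Ioi a)
  have h₀ := (integrable_one_add_sq_rpow (r := -α) (by linarith)).integrableOn (s := Ioi a)
  have hftc := integral_Ioi_of_hasDerivAt_of_tendsto' (a := a)
    (fun u _ => hasDerivAt_mul_one_add_sq_rpow_one_sub α u)
    ((h₁.const_mul _).add (h₀.const_mul _)) (tendsto_mul_one_add_sq_rpow_atTop (by linarith))
  rw [integral_add (h₁.const_mul _) (h₀.const_mul _), integral_const_mul,
    integral_const_mul] at hftc
  linarith

lemma mul_integral_Ioi_one_add_sq_rpow_le {α : ℝ} (hα : 1 < α) (a : ℝ) :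
    2 * (α - 1) * a * ∫ u in Ioi a, (1 + u ^ 2) ^ (-α) ≤ (1 + a ^ 2) ^ (1 - α) := by
  have hα₁ : α - 1 ≠ 0 := by linarith
  have hderiv (u : ℝ) : HasDerivAt (fun u : ℝ => -(1 + u ^ 2) ^ (1 - α) / (2 * (α - 1)))
      (u * (1 + u ^ 2) ^ (-α)) u := by
    refine ((hasDerivAt_one_add_sq_rpow_one_sub α u).neg.div_const _).congr_deriv ?_
    field_simp
    ring
  have hlim : Tendsto (fun u : ℝ => -(1 + u ^ 2) ^ (1 - α) / (2 * (α - 1))) atTop (𝓝 0) := by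
    simpa using (tendsto_one_add_sq_rpow_atTop (by linarith : 1 - α < 0)).neg.div_const _
  have hftc := integral_Ioi_of_hasDerivAt_of_tendsto' (a := a) (fun u _ => hderiv u)
    (integrable_mul_one_add_sq_rpow (by linarith)).integrableOn hlim
  calc 2 * (α - 1) * a * ∫ u in Ioi a, (1 + u ^ 2) ^ (-α)
      = 2 * (α - 1) * ∫ u in Ioi a, a * (1 + u ^ 2) ^ (-α) := by rw [integral_const_mul]; ring
    _ ≤ 2 * (α - 1) * ∫ u in Ioi a, u * (1 + u ^ 2) ^ (-α) := by
      gcongr 2 * (α - 1) * ?_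
      refine setIntegral_mono_on
        ((integrable_one_add_sq_rpow (by linarith)).integrableOn.const_mul a)
        (integrable_mul_one_add_sq_rpow (by linarith)).integrableOn measurableSet_Ioi
        fun u hu => ?_
      exact mul_le_mul_of_nonneg_right (le_of_lt hu) (rpow_nonneg (by positivity) _)
    _ = (1 + a ^ 2) ^ (1 - α) := by rw [hftc]; field_simp; ring

lemma hasDerivAt_neg_mul_one_add_sq_rpow_div {α : ℝ} (hα : 1 / 2 ≤ α) (u : ℝ) :
    HasDerivAt (fun u : ℝ => -(u * (1 + u ^ 2) ^ (1 - α) / (1 + (2 * α - 1) * u ^ 2)))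
      ((1 + u ^ 2) ^ (-α) - 2 * (1 + u ^ 2) ^ (1 - α) / (1 + (2 * α - 1) * u ^ 2) ^ 2) u := by
  have hD : 1 + (2 * α - 1) * u ^ 2 ≠ 0 := by nlinarith [sq_nonneg u]
  have hD' := ((hasDerivAt_pow 2 u).const_mul (2 * α - 1)).const_add 1
  refine ((hasDerivAt_mul_one_add_sq_rpow_one_sub α u).div hD' hD).neg.congr_deriv ?_
  have hD₂ : 1 + u ^ 2 * (2 * α - 1) ≠ 0 := by rwa [mul_comm (2 * α - 1)] at hD
  rw [one_add_sq_rpow_one_sub u α, Nat.cast_ofNat, Nat.add_one_sub_one, pow_one]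
  field_simp
  ring

lemma le_mul_integral_Ioi_one_add_sq_rpow {α : ℝ} (hα : 3 / 2 < α) (a : ℝ) :
    a * (1 + a ^ 2) ^ (1 - α) ≤ (1 + (2 * α - 1) * a ^ 2) * ∫ u in Ioi a, (1 + u ^ 2) ^ (-α) := by
  set g : ℝ → ℝ := fun u => 2 * (1 + u ^ 2) ^ (1 - α) / (1 + (2 * α - 1) * u ^ 2) ^ 2
  have hD (u : ℝ) : 1 ≤ 1 + (2 * α - 1) * u ^ 2 := by nlinarith [sq_nonneg u]
  have hg_nonneg (u : ℝ) : 0 ≤ g u := by positivity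
  have hg : Integrable g :=
    ((integrable_one_add_sq_rpow (r := 1 - α) (by linarith)).const_mul 2).mono' (by fun_prop)
      (Eventually.of_forall fun u => by
        rw [norm_of_nonneg (hg_nonneg u)]
        exact div_le_self (by positivity) (one_le_pow₀ (hD u)))
  have h₀ := (integrable_one_add_sq_rpow (r := -α) (by linarith)).integrableOn (s := Ioi a)
  have hlim : Tendsto (fun u : ℝ => -(u * (1 + u ^ 2) ^ (1 - α) / (1 + (2 * α - 1) * u ^ 2)))
      atTop (𝓝 0) := by
    refine neg_zero (G := ℝ) ▸ (squeeze_zero_norm' (Eventually.of_forall fun u => ?_)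
      (tendsto_one_add_sq_rpow_atTop (r := 1 - α + 1 / 2) (by linarith))).neg
    rw [norm_div, norm_of_nonneg (zero_le_one.trans (hD u))]
    exact (div_le_self (norm_nonneg _) (hD u)).trans (norm_mul_one_add_sq_rpow_le u _)
  have hftc := integral_Ioi_of_hasDerivAt_of_tendsto' (a := a)
    (fun u _ => hasDerivAt_neg_mul_one_add_sq_rpow_div (by linarith) u)
    (h₀.sub hg.integrableOn) hlim
  rw [integral_sub h₀ hg.integrableOn] at hftc
  have hG := setIntegral_nonneg (μ := volume) (measurableSet_Ioi (a := a)) fun u _ => hg_nonneg u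
  rw [← div_le_iff₀' (zero_lt_one.trans_le (hD a))]
  linarith

lemma integral_Ioi_one_add_sq_rpow_ratio_bounds {α a : ℝ} (hα : 3 / 2 < α) (ha : 0 < a) :
    (1 + a ^ 2) * ((2 * α - 2) / (2 * α - 3))
        ≤ (∫ u in Ioi a, (1 + u ^ 2) ^ (1 - α)) / ∫ u in Ioi a, (1 + u ^ 2) ^ (-α) ∧
      (∫ u in Ioi a, (1 + u ^ 2) ^ (1 - α)) / (∫ u in Ioi a, (1 + u ^ 2) ^ (-α))
        ≤ (1 + a ^ 2) * ((2 * α - 1) / (2 * α - 3)) := by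
  set I₁ := ∫ u in Ioi a, (1 + u ^ 2) ^ (1 - α)
  set I₀ := ∫ u in Ioi a, (1 + u ^ 2) ^ (-α)
  have hrec := integral_Ioi_one_add_sq_rpow_recurrence hα a
  have hupper := mul_le_mul_of_nonneg_left
    (mul_integral_Ioi_one_add_sq_rpow_le (by linarith : 1 < α) a) ha.le
  have hlower := le_mul_integral_Ioi_one_add_sq_rpow hα a
  have hI₀ : 0 < I₀ := pos_of_mul_pos_right
    ((by positivity : 0 < a * (1 + a ^ 2) ^ (1 - α)).trans_le hlower) (by nlinarith [sq_nonneg a])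
  have h₃ : 0 < 2 * α - 3 := by linarith
  rw [mul_div_assoc', mul_div_assoc', div_le_div_iff₀ h₃ hI₀, div_le_div_iff₀ hI₀ h₃]
  constructor <;> linarith

/-- Bounds on the ratio `c_{q+1}/c_q` of the integrals
`c_q = ∫_0^∞ (1+(t−T)²)^{(5+2q−n)/2} dt` for `T < 0` and `n > 2q + 8`. -/
theorem cq_ratio_bounds (T : ℝ) (hT : T < 0) (n q : ℕ) (hn : 2 * q + 8 < n)
    (c : ℕ → ℝ)
    (hc : ∀ m : ℕ, c m
      = ∫ t in Set.Ioi (0 : ℝ), (1 + (t - T) ^ 2) ^ ((5 + 2 * (m : ℝ) - (n : ℝ)) / 2)) :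
    (1 + T ^ 2) * (((n : ℝ) - 2 * q - 7) / ((n : ℝ) - 2 * q - 8)) ≤ c (q + 1) / c q ∧
    c (q + 1) / c q ≤ (1 + T ^ 2) * (((n : ℝ) - 2 * q - 6) / ((n : ℝ) - 2 * q - 8)) := by
  set α : ℝ := ((n : ℝ) - 2 * q - 5) / 2 with hα
  have hn' : 2 * (q : ℝ) + 9 ≤ n := by exact_mod_cast hn
  have hshift (r : ℝ) :
      ∫ t in Ioi (0 : ℝ), (1 + (t - T) ^ 2) ^ r = ∫ u in Ioi (-T), (1 + u ^ 2) ^ r := by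
    rw [setIntegral_Ioi_comp_sub_right (fun u => (1 + u ^ 2) ^ r), zero_sub]
  rw [hc, hc, hshift, hshift, ← neg_sq T,
    show (5 + 2 * (q : ℝ) - n) / 2 = -α by ring,
    show (5 + 2 * ((q + 1 : ℕ) : ℝ) - n) / 2 = 1 - α by push_cast; ring,
    show (n : ℝ) - 2 * q - 7 = 2 * α - 2 by ring, show (n : ℝ) - 2 * q - 8 = 2 * α - 3 by ring,
    show (n : ℝ) - 2 * q - 6 = 2 * α - 1 by ring]
  exact integral_Ioi_one_add_sq_rpow_ratio_bounds (by linarith) (neg_pos.mpr hT)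
end

section
/- Let T < 0 be a real number and let n ≥ 25 be an integer. Define c_q = ∫_0^∞ (1+(t−T)²)^{(5+2q−n)/2} dt for q = 0, 1, 2. Then (n−10)(n−7)/(n−8)² ≤ c₁² / (c₀ c₂) ≤ (n−6)(n−10) / ((n−8)(n−9)). -/
/-!
Integration by parts gives the recurrences `(n-8) c₁ = (n-7) c₀ + B` and
`(n-10) c₂ = (n-9) c₁ + (1+T²) B` with `B = -T (1+T²)^((7-n)/2) > 0`.
The upper bound is Cauchy–Schwarz, `c₁² ≤ c₀ c₂`. For the lower bound the recurrences turn
`(n-8) ((n-8)² c₁² - (n-7)(n-10) c₀ c₂)` into `w² + B ((n-8) B - ((n-8) T² - 1) w)` with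
`w = (n-7) c₀`, so it suffices to bound `c₀` from above. That bound comes from comparing the
integrand of `c₀` with the derivative of the explicit function
`s (1+s²)^(-(n-7)/2) / ((n-8) s² - 1)`, `s = t - T`.
-/

open MeasureTheory Set Filter Topology

theorem sq_integral_mul_le_integral_sq_mul {α : Type*} [MeasurableSpace α] {μ : Measure α}
    {f g : α → ℝ} (hf : Integrable (fun x => f x ^ 2) μ) (hg : Integrable (fun x => g x ^ 2) μ)
    (hfg : Integrable (fun x => f x * g x) μ) :
    (∫ x, f x * g x ∂μ) ^ 2 ≤ (∫ x, f x ^ 2 ∂μ) * ∫ x, g x ^ 2 ∂μ := by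
  have hquad : ∀ r : ℝ, 0 ≤ (∫ x, g x ^ 2 ∂μ) * (r * r) + (-2 * ∫ x, f x * g x ∂μ) * r
      + ∫ x, f x ^ 2 ∂μ := by
    intro r
    have hexp : ∫ x, (r * g x - f x) ^ 2 ∂μ = (∫ x, g x ^ 2 ∂μ) * (r * r)
        + (-2 * ∫ x, f x * g x ∂μ) * r + ∫ x, f x ^ 2 ∂μ := by
      have : (fun x => (r * g x - f x) ^ 2)
          = fun x => (r ^ 2 * g x ^ 2 + (-2 * r) * (f x * g x)) + f x ^ 2 := by
        ext x; ring
      have hsum : Integrable (fun x => r ^ 2 * g x ^ 2 + (-2 * r) * (f x * g x)) μ :=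
        (hg.const_mul _).add (hfg.const_mul _)
      rw [this, integral_add hsum hf, integral_add (hg.const_mul _) (hfg.const_mul _),
        integral_const_mul, integral_const_mul]
      ring
    exact hexp ▸ integral_nonneg fun x => sq_nonneg _
  have := discrim_le_zero hquad
  rw [discrim] at this
  nlinarith

section

variable (T : ℝ)

theorem tendsto_one_add_sub_sq_rpow_atTop_zero {e : ℝ} (he : e < 0) :
    Tendsto (fun t : ℝ => (1 + (t - T) ^ 2) ^ e) atTop (𝓝 0) := by
  have hsq : Tendsto (fun t : ℝ => 1 + (t - T) ^ 2) atTop atTop :=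
    tendsto_atTop_add_const_left _ 1 <|
      (tendsto_pow_atTop two_ne_zero).comp (tendsto_atTop_add_const_right _ (-T) tendsto_id)
  simpa only [neg_neg, Function.comp_def] using (tendsto_rpow_neg_atTop (neg_pos.2 he)).comp hsq

theorem integrable_one_add_sub_sq_rpow {β : ℝ} (hβ : β < -1 / 2) :
    Integrable fun t : ℝ => (1 + (t - T) ^ 2) ^ β := by
  have h := integrable_rpow_neg_one_add_norm_sq (E := ℝ) (μ := volume) (r := -2 * β)
    (by rw [Module.finrank_self, Nat.cast_one]; linarith)
  simpa [Real.norm_eq_abs, sq_abs] using h.comp_sub_right T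

noncomputable def bracketIntegral (β : ℝ) : ℝ := ∫ t in Ioi (0 : ℝ), (1 + (t - T) ^ 2) ^ β

theorem bracketIntegral_pos {β : ℝ} (hβ : β < -1 / 2) : 0 < bracketIntegral T β := by
  have hsupp : (Function.support fun t : ℝ => (1 + (t - T) ^ 2) ^ β) = univ :=
    Function.support_eq_univ fun t => by positivity
  rw [bracketIntegral, setIntegral_pos_iff_support_of_nonneg_ae
    (Eventually.of_forall fun t => by positivity)
    (integrable_one_add_sub_sq_rpow T hβ).integrableOn,
    hsupp, univ_inter, Real.volume_Ioi]
  exact ENNReal.zero_lt_top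

theorem sq_bracketIntegral_le {β γ : ℝ} (hβ : β < -1 / 2) (hγ : γ < -1 / 2) :
    bracketIntegral T ((β + γ) / 2) ^ 2 ≤ bracketIntegral T β * bracketIntegral T γ := by
  have hsq : ∀ {δ : ℝ} (t : ℝ), ((1 + (t - T) ^ 2) ^ (δ / 2)) ^ 2 = (1 + (t - T) ^ 2) ^ δ := by
    intro δ t
    rw [← Real.rpow_natCast, ← Real.rpow_mul (by positivity)]
    norm_num
  have hmul : ∀ t : ℝ, (1 + (t - T) ^ 2) ^ (β / 2) * (1 + (t - T) ^ 2) ^ (γ / 2)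
      = (1 + (t - T) ^ 2) ^ ((β + γ) / 2) := by
    intro t
    rw [← Real.rpow_add (by positivity), add_div]
  have h := sq_integral_mul_le_integral_sq_mul (μ := volume.restrict (Ioi 0))
    (f := fun t => (1 + (t - T) ^ 2) ^ (β / 2)) (g := fun t => (1 + (t - T) ^ 2) ^ (γ / 2))
  simp only [hsq, hmul] at h
  exact h (integrable_one_add_sub_sq_rpow T hβ).integrableOn
    (integrable_one_add_sub_sq_rpow T hγ).integrableOn
    (integrable_one_add_sub_sq_rpow T (by linarith)).integrableOn

theorem bracketIntegral_recurrence {β : ℝ} (hβ : β < -1 / 2) :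
    (1 + 2 * β) * bracketIntegral T β - 2 * β * bracketIntegral T (β - 1)
      = T * (1 + T ^ 2) ^ β := by
  have hderiv : ∀ t : ℝ, HasDerivAt (fun t => (t - T) * (1 + (t - T) ^ 2) ^ β)
      ((1 + 2 * β) * (1 + (t - T) ^ 2) ^ β - 2 * β * (1 + (t - T) ^ 2) ^ (β - 1)) t := by
    intro t
    have hpos : (0 : ℝ) < 1 + (t - T) ^ 2 := by positivity
    have hbase : HasDerivAt (fun t => 1 + (t - T) ^ 2) (2 * (t - T)) t := by
      simpa using (((hasDerivAt_id t).sub_const T).pow 2).const_add 1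
    refine (((hasDerivAt_id t).sub_const T).mul
      (hbase.rpow_const (p := β) (Or.inl hpos.ne'))).congr_deriv ?_
    rw [show (1 + (t - T) ^ 2) ^ β = (1 + (t - T) ^ 2) ^ (β - 1) * (1 + (t - T) ^ 2) by
      rw [← Real.rpow_add_one hpos.ne', sub_add_cancel]]
    simp only [id_eq]
    ring
  have hlim : Tendsto (fun t => (t - T) * (1 + (t - T) ^ 2) ^ β) atTop (𝓝 0) := by
    refine tendsto_of_tendsto_of_tendsto_of_le_of_le' tendsto_const_nhds
      (tendsto_one_add_sub_sq_rpow_atTop_zero T (by linarith : β + 1 / 2 < 0)) ?_ ?_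
    · filter_upwards [eventually_ge_atTop T] with t ht
      exact mul_nonneg (sub_nonneg.2 ht) (by positivity)
    · filter_upwards [eventually_ge_atTop T] with t ht
      have hpos : (0 : ℝ) < 1 + (t - T) ^ 2 := by positivity
      have hle : t - T ≤ (1 + (t - T) ^ 2) ^ (1 / 2 : ℝ) := by
        rw [← Real.sqrt_eq_rpow]
        exact Real.le_sqrt_of_sq_le (by linarith)
      calc (t - T) * (1 + (t - T) ^ 2) ^ β
          ≤ (1 + (t - T) ^ 2) ^ (1 / 2 : ℝ) * (1 + (t - T) ^ 2) ^ β := by gcongr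
        _ = (1 + (t - T) ^ 2) ^ (β + 1 / 2) := by rw [← Real.rpow_add hpos, add_comm (1 / 2 : ℝ)]
  have hint : ∀ {δ : ℝ}, δ < -1 / 2 → IntegrableOn (fun t => (1 + (t - T) ^ 2) ^ δ) (Ioi 0) :=
    fun hδ => (integrable_one_add_sub_sq_rpow T hδ).integrableOn
  have hftc := integral_Ioi_of_hasDerivAt_of_tendsto' (fun t _ => hderiv t)
    (((hint hβ).const_mul _).sub ((hint (by linarith : β - 1 < -1 / 2)).const_mul _)) hlim
  rw [integral_sub ((hint hβ).const_mul _) ((hint (by linarith)).const_mul _),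
    integral_const_mul, integral_const_mul] at hftc
  rw [bracketIntegral, bracketIntegral, hftc, zero_sub, zero_sub, neg_sq]
  ring

noncomputable def tailMajorant (N t : ℝ) : ℝ :=
  (t - T) * (1 + (t - T) ^ 2) ^ (-(N + 1) / 2) / (N * (t - T) ^ 2 - 1)

theorem hasDerivAt_tailMajorant {N t : ℝ} (hD : N * (t - T) ^ 2 - 1 ≠ 0) :
    HasDerivAt (tailMajorant T N) (-(1 + (t - T) ^ 2) ^ (-(N + 3) / 2)
      * ((N * (t - T) ^ 2 - 1) ^ 2 + 2 * N * (t - T) ^ 2 * (1 + (t - T) ^ 2))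
      / (N * (t - T) ^ 2 - 1) ^ 2) t := by
  have hpos : (0 : ℝ) < 1 + (t - T) ^ 2 := by positivity
  have hbase : HasDerivAt (fun t => 1 + (t - T) ^ 2) (2 * (t - T)) t := by
    simpa using (((hasDerivAt_id t).sub_const T).pow 2).const_add 1
  have hden : HasDerivAt (fun t => N * (t - T) ^ 2 - 1) (N * (2 * (t - T))) t := by
    simpa using ((((hasDerivAt_id t).sub_const T).pow 2).const_mul N).sub_const 1
  refine ((((hasDerivAt_id t).sub_const T).mul
    (hbase.rpow_const (p := -(N + 1) / 2) (Or.inl hpos.ne'))).div hden hD).congr_deriv ?_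
  simp only [id_eq, Pi.mul_apply]
  rw [show -(N + 1) / 2 - 1 = -(N + 3) / 2 by ring,
    show (1 + (t - T) ^ 2) ^ (-(N + 1) / 2)
        = (1 + (t - T) ^ 2) ^ (-(N + 3) / 2) * (1 + (t - T) ^ 2) by
      rw [← Real.rpow_add_one hpos.ne']; congr 1; ring]
  field_simp
  ring

theorem tendsto_tailMajorant_atTop {N : ℝ} (hN : 0 < N) :
    Tendsto (tailMajorant T N) atTop (𝓝 0) := by
  have hbound : ∀ᶠ t in atTop, 0 ≤ tailMajorant T N t
      ∧ tailMajorant T N t ≤ (1 + (t - T) ^ 2) ^ (-(N + 1) / 2) := by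
    filter_upwards [eventually_ge_atTop (T + 1 + 2 / N)] with t ht
    have h2N : 0 < 2 / N := by positivity
    have hNs : N + 2 ≤ N * (t - T) := by
      have := mul_le_mul_of_nonneg_left (by linarith : 1 + 2 / N ≤ t - T) hN.le
      rwa [mul_add, mul_div_cancel₀ _ hN.ne', mul_one] at this
    have hden : t - T ≤ N * (t - T) ^ 2 - 1 := by nlinarith
    refine ⟨div_nonneg (mul_nonneg (by linarith) (by positivity)) (by linarith), ?_⟩
    rw [tailMajorant, div_le_iff₀ (by linarith), mul_comm]
    exact mul_le_mul_of_nonneg_left hden (by positivity)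
  exact tendsto_of_tendsto_of_tendsto_of_le_of_le' tendsto_const_nhds
    (tendsto_one_add_sub_sq_rpow_atTop_zero T (by linarith))
    (hbound.mono fun _ h => h.1) (hbound.mono fun _ h => h.2)

/-- `F = tailMajorant T N` satisfies `-N F' ≥ (N + 1) (1 + (t - T)²)^(-(N+3)/2)` wherever
`N (t - T)² > 1`, so integrating over `t > 0` bounds the integral by `N F 0`. -/
theorem mul_bracketIntegral_le {N : ℝ} (hN : 0 < N) (hT : T < 0) :
    (N + 1) * (N * T ^ 2 - 1) * bracketIntegral T (-(N + 3) / 2)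
      ≤ -N * T * (1 + T ^ 2) ^ (-(N + 1) / 2) := by
  rcases le_or_gt (N * T ^ 2) 1 with hNT | hNT
  · have hJ := (bracketIntegral_pos T (β := -(N + 3) / 2) (by linarith)).le
    have hRHS : 0 ≤ -N * T * (1 + T ^ 2) ^ (-(N + 1) / 2) :=
      mul_nonneg (by nlinarith) (by positivity)
    nlinarith [mul_nonpos_of_nonpos_of_nonneg (by nlinarith : (N + 1) * (N * T ^ 2 - 1) ≤ 0) hJ]
  set F' : ℝ → ℝ := fun t => -(1 + (t - T) ^ 2) ^ (-(N + 3) / 2)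
    * ((N * (t - T) ^ 2 - 1) ^ 2 + 2 * N * (t - T) ^ 2 * (1 + (t - T) ^ 2))
    / (N * (t - T) ^ 2 - 1) ^ 2
  have hD : ∀ t ∈ Ici (0 : ℝ), 0 < N * (t - T) ^ 2 - 1 := fun t ht => by
    have : T ^ 2 ≤ (t - T) ^ 2 := by nlinarith [mem_Ici.1 ht]
    nlinarith
  have hderiv : ∀ t ∈ Ici (0 : ℝ), HasDerivAt (tailMajorant T N) (F' t) t :=
    fun t ht => hasDerivAt_tailMajorant T (hD t ht).ne'
  have hneg : ∀ t ∈ Ioi (0 : ℝ), F' t ≤ 0 := fun t _ => by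
    simp only [F']
    rw [neg_mul, neg_div, neg_nonpos]
    positivity
  have hlim := tendsto_tailMajorant_atTop T hN
  have hcmp : (N + 1) * bracketIntegral T (-(N + 3) / 2) ≤ N * tailMajorant T N 0 := by
    rw [bracketIntegral, ← integral_const_mul,
      show N * tailMajorant T N 0 = ∫ t in Ioi 0, -N * F' t by
        rw [integral_const_mul, integral_Ioi_of_hasDerivAt_of_nonpos' hderiv hneg hlim]; ring]
    refine setIntegral_mono_on
      ((integrable_one_add_sub_sq_rpow T (by linarith)).integrableOn.const_mul _)
      ((integrableOn_Ioi_deriv_of_nonpos' hderiv hneg hlim).const_mul _) measurableSet_Ioi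
      fun t ht => ?_
    have hDt := hD t (mem_Ici_of_Ioi ht)
    simp only [F']
    rw [mul_div_assoc', le_div_iff₀ (by positivity)]
    have hy : 0 < (1 + (t - T) ^ 2) ^ (-(N + 3) / 2) := by positivity
    nlinarith [mul_pos hN hy]
  have hF0 : (N * T ^ 2 - 1) * (N * tailMajorant T N 0)
      = -N * T * (1 + T ^ 2) ^ (-(N + 1) / 2) := by
    simp only [tailMajorant, zero_sub, neg_sq]
    field_simp
  calc (N + 1) * (N * T ^ 2 - 1) * bracketIntegral T (-(N + 3) / 2)
      = (N * T ^ 2 - 1) * ((N + 1) * bracketIntegral T (-(N + 3) / 2)) := by ring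
    _ ≤ (N * T ^ 2 - 1) * (N * tailMajorant T N 0) := by gcongr
    _ = -N * T * (1 + T ^ 2) ^ (-(N + 1) / 2) := hF0

end

theorem le_sq_div_mul_of_recurrence {ν x c₀ c₁ c₂ B : ℝ} (hν : 8 < ν) (hB : 0 ≤ B)
    (hc : 0 < c₀ * c₂) (h₁ : (ν - 8) * c₁ = (ν - 7) * c₀ + B)
    (h₂ : (ν - 10) * c₂ = (ν - 9) * c₁ + (1 + x) * B)
    (htail : (ν - 7) * ((ν - 8) * x - 1) * c₀ ≤ (ν - 8) * B) :
    (ν - 10) * (ν - 7) / (ν - 8) ^ 2 ≤ c₁ ^ 2 / (c₀ * c₂) := by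
  have key : (ν - 8) * (c₁ ^ 2 * (ν - 8) ^ 2 - (ν - 10) * (ν - 7) * (c₀ * c₂))
      = ((ν - 7) * c₀) ^ 2 + B * ((ν - 8) * B - (ν - 7) * ((ν - 8) * x - 1) * c₀) := by
    linear_combination ((ν - 8) ^ 2 * c₁ + (ν - 7) * c₀ + (ν - 8) * B) * h₁
      - (ν - 8) * (ν - 7) * c₀ * h₂
  rw [div_le_div_iff₀ (by positivity) hc]
  nlinarith [sq_nonneg ((ν - 7) * c₀), mul_nonneg hB (sub_nonneg.2 htail)]

/-- For `T < 0` and `n ≥ 25`, with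
`c_q = ∫_0^∞ (1+(t−T)²)^{(5+2q−n)/2} dt` (`q = 0,1,2`), one has
`(n−10)(n−7)/(n−8)² ≤ c₁²/(c₀c₂) ≤ (n−6)(n−10)/((n−8)(n−9))`. -/
theorem cq_quotient_bounds (T : ℝ) (hT : T < 0) (n : ℕ) (hn : 25 ≤ n)
    (c : ℕ → ℝ)
    (hc : ∀ m : ℕ, c m
      = ∫ t in Set.Ioi (0 : ℝ), (1 + (t - T) ^ 2) ^ ((5 + 2 * (m : ℝ) - (n : ℝ)) / 2)) :
    ((n : ℝ) - 10) * ((n : ℝ) - 7) / ((n : ℝ) - 8) ^ 2 ≤ c 1 ^ 2 / (c 0 * c 2) ∧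
    c 1 ^ 2 / (c 0 * c 2) ≤ ((n : ℝ) - 6) * ((n : ℝ) - 10) / (((n : ℝ) - 8) * ((n : ℝ) - 9)) := by
  have hν : (25 : ℝ) ≤ n := by exact_mod_cast hn
  have hJ : ∀ m : ℕ, c m = bracketIntegral T ((5 + 2 * m - n) / 2) := hc
  have h₀ : c 0 = bracketIntegral T ((5 - n) / 2) := by rw [hJ]; norm_num
  have h₁ : c 1 = bracketIntegral T ((7 - n) / 2) := by rw [hJ]; norm_num
  have h₂ : c 2 = bracketIntegral T ((9 - n) / 2) := by rw [hJ]; norm_num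
  have hpos : 0 < c 0 * c 2 := by
    rw [h₀, h₂]
    exact mul_pos (bracketIntegral_pos T (by linarith)) (bracketIntegral_pos T (by linarith))
  have rec₁ := bracketIntegral_recurrence T (β := (7 - n) / 2) (by linarith)
  have rec₂ := bracketIntegral_recurrence T (β := (9 - n) / 2) (by linarith)
  have tail := mul_bracketIntegral_le T (N := n - 8) (by linarith) hT
  have cs := sq_bracketIntegral_le T (β := (5 - n) / 2) (γ := (9 - n) / 2) (by linarith)
    (by linarith)
  rw [show (7 - n : ℝ) / 2 - 1 = (5 - n) / 2 by ring, ← h₀, ← h₁] at rec₁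
  rw [show (9 - n : ℝ) / 2 - 1 = (7 - n) / 2 by ring, ← h₁, ← h₂] at rec₂
  rw [show -((n : ℝ) - 8 + 3) / 2 = (5 - n) / 2 by ring,
    show -((n : ℝ) - 8 + 1) / 2 = (7 - n) / 2 by ring, ← h₀] at tail
  rw [show ((5 - n : ℝ) / 2 + (9 - n) / 2) / 2 = (7 - n) / 2 by ring, ← h₀, ← h₁, ← h₂] at cs
  have hpow : (1 + T ^ 2) ^ ((9 - n : ℝ) / 2) = (1 + T ^ 2) * (1 + T ^ 2) ^ ((7 - n : ℝ) / 2) := by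
    rw [mul_comm, ← Real.rpow_add_one (by positivity)]; congr 1; ring
  constructor
  · refine le_sq_div_mul_of_recurrence (x := T ^ 2) (B := -T * (1 + T ^ 2) ^ ((7 - n : ℝ) / 2))
      (by linarith) (mul_nonneg (by linarith) (by positivity)) hpos ?_ ?_ ?_
    · linear_combination -rec₁
    · linear_combination -rec₂ - T * hpow
    · linear_combination tail
  · calc c 1 ^ 2 / (c 0 * c 2) ≤ 1 := (div_le_one hpos).2 cs
      _ ≤ _ := by rw [one_le_div (by nlinarith)]; nlinarith
end

section
/- Let T < 0 be a real number and let n ≥ 62 be an integer. Define c_q = ∫_0^∞ (1+(t−T)²)^{(5+2q−n)/2} dt for q = 0, 1, 2. Then 9 c₁² − 8 · ((n+7)(n−7)/((n+3)(n−9))) · c₀ c₂ > 0. -/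
/-!
Write `I(β) = ∫₀^∞ (1 + (t - T)²)^(-β) dt`, so that `c_q = I((n - 5 - 2q)/2)`, and `u = 1/(1 + T²)`.
Integrating the derivative of `(t - T)(1 + (t - T)²)^(-β)` gives the recurrence
`(2β - 1) I(β) = 2β I(β + 1) - T (1 + T²)^(-β)`, and `(t - T)² > T²` on `t > 0` gives
`I(β + 1) ≤ u I(β)`. Eliminating the boundary terms (which scale by `u` as `β` increases) expresses
`c₂` through `c₁, c₀` and yields the bound `(n - 6 - 2u) c₀ ≤ (n - 8) u c₁`. After multiplying by
`u (n - 10)`, the claim is an upper bound for the concave quadratic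
`c₀ (((n - 9) u + n - 8) c₁ - (n - 7) c₀)`: for `u ≥ 0.77` its maximum is small enough, while for
`u ≤ 0.77` the bound on `c₀` lies left of the vertex and evaluating the quadratic there suffices.
-/

open MeasureTheory Set Filter

noncomputable def tailIntegral (T β : ℝ) : ℝ :=
  ∫ t in Ioi 0, (1 + (t - T) ^ 2) ^ (-β)

lemma one_add_sq_pos (x : ℝ) : 0 < 1 + x ^ 2 := by positivity

lemma one_add_sq_rpow_neg_add_one (x β : ℝ) :
    (1 + x ^ 2) ^ (-(β + 1)) = (1 + x ^ 2)⁻¹ * (1 + x ^ 2) ^ (-β) := by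
  rw [neg_add', Real.rpow_sub_one (one_add_sq_pos x).ne', div_eq_inv_mul]

section

variable {β : ℝ}

lemma integrable_one_add_sub_sq_rpow_neg (T : ℝ) (hβ : 1 / 2 < β) :
    Integrable fun t : ℝ => (1 + (t - T) ^ 2) ^ (-β) := by
  have h := integrable_rpow_neg_one_add_norm_sq (E := ℝ) (μ := volume) (r := 2 * β)
    (by simp; linarith)
  simpa [Real.norm_eq_abs, sq_abs, neg_div] using h.comp_sub_right T

lemma tailIntegral_pos (T : ℝ) (hβ : 1 / 2 < β) : 0 < tailIntegral T β := by
  rw [tailIntegral, setIntegral_pos_iff_support_of_nonneg_ae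
    (.of_forall fun t => (Real.rpow_pos_of_pos (one_add_sq_pos _) _).le)
    (integrable_one_add_sub_sq_rpow_neg T hβ).integrableOn]
  have : (Function.support fun t : ℝ => (1 + (t - T) ^ 2) ^ (-β)) = univ :=
    Function.support_eq_univ fun t => (Real.rpow_pos_of_pos (one_add_sq_pos _) _).ne'
  simp [this]

lemma tendsto_sub_mul_one_add_sub_sq_rpow_neg (T : ℝ) (hβ : 1 / 2 < β) :
    Tendsto (fun t : ℝ => (t - T) * (1 + (t - T) ^ 2) ^ (-β)) atTop (nhds 0) := by
  have hw : Tendsto (fun t : ℝ => 1 + (t - T) ^ 2) atTop atTop :=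
    tendsto_atTop_add_const_left _ 1 ((tendsto_pow_atTop two_ne_zero).comp
      (tendsto_atTop_add_const_right _ (-T) tendsto_id))
  refine squeeze_zero_norm (fun t => ?_)
    ((tendsto_rpow_neg_atTop (y := β - 1 / 2) (by linarith)).comp hw)
  have hpos := one_add_sq_pos (t - T)
  calc ‖(t - T) * (1 + (t - T) ^ 2) ^ (-β)‖
      ≤ √(1 + (t - T) ^ 2) * (1 + (t - T) ^ 2) ^ (-β) := by
        rw [norm_mul, Real.norm_eq_abs, Real.norm_of_nonneg (by positivity)]
        gcongr
        exact Real.abs_le_sqrt (by linarith)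
    _ = (1 + (t - T) ^ 2) ^ (-(β - 1 / 2)) := by
        rw [Real.sqrt_eq_rpow, ← Real.rpow_add hpos]
        ring_nf

lemma hasDerivAt_sub_mul_one_add_sub_sq_rpow_neg (T β t : ℝ) :
    HasDerivAt (fun t : ℝ => (t - T) * (1 + (t - T) ^ 2) ^ (-β))
      ((1 - 2 * β) * (1 + (t - T) ^ 2) ^ (-β) + 2 * β * (1 + (t - T) ^ 2) ^ (-(β + 1))) t := by
  have hw : HasDerivAt (fun t : ℝ => 1 + (t - T) ^ 2) (2 * (t - T)) t := by
    simpa using (((hasDerivAt_id t).sub_const T).pow 2).const_add 1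
  refine (((hasDerivAt_id t).sub_const T).mul
    (hw.rpow_const (p := -β) (.inl (one_add_sq_pos _).ne'))).congr_deriv ?_
  rw [← neg_add', one_add_sq_rpow_neg_add_one, id]
  have := (one_add_sq_pos (t - T)).ne'
  field_simp
  ring

lemma tailIntegral_recurrence (T : ℝ) (hβ : 1 / 2 < β) :
    (2 * β - 1) * tailIntegral T β
      = 2 * β * tailIntegral T (β + 1) - T * (1 + T ^ 2) ^ (-β) := by
  have hint := fun γ (hγ : 1 / 2 < γ) =>
    (integrable_one_add_sub_sq_rpow_neg T hγ).integrableOn (s := Ioi 0)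
  have h := integral_Ioi_of_hasDerivAt_of_tendsto'
    (fun t _ => hasDerivAt_sub_mul_one_add_sub_sq_rpow_neg T β t)
    (((hint β hβ).const_mul _).add ((hint (β + 1) (by linarith)).const_mul _))
    (tendsto_sub_mul_one_add_sub_sq_rpow_neg T hβ)
  rw [integral_add ((hint β hβ).const_mul _) ((hint (β + 1) (by linarith)).const_mul _),
    integral_const_mul, integral_const_mul] at h
  simp only [tailIntegral]
  rw [zero_sub, zero_sub, neg_sq] at h
  linarith

lemma tailIntegral_add_one_le {T : ℝ} (hT : T ≤ 0) (hβ : 1 / 2 < β) :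
    tailIntegral T (β + 1) ≤ (1 + T ^ 2)⁻¹ * tailIntegral T β := by
  rw [tailIntegral, tailIntegral, ← integral_const_mul]
  refine setIntegral_mono_on (integrable_one_add_sub_sq_rpow_neg T (by linarith)).integrableOn
    ((integrable_one_add_sub_sq_rpow_neg T hβ).integrableOn.const_mul _) measurableSet_Ioi
    fun t (ht : 0 < t) => ?_
  rw [one_add_sq_rpow_neg_add_one]
  refine mul_le_mul_of_nonneg_right (inv_anti₀ (one_add_sq_pos T) ?_) (by positivity)
  nlinarith

lemma tailIntegral_three_term (T : ℝ) (hβ : 1 / 2 < β) :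
    (1 + T ^ 2)⁻¹ * (2 * β - 1) * tailIntegral T β
      = (2 * β * (1 + T ^ 2)⁻¹ + 2 * β + 1) * tailIntegral T (β + 1)
        - (2 * β + 2) * tailIntegral T (β + 2) := by
  have h0 := tailIntegral_recurrence T hβ
  have h1 := tailIntegral_recurrence T (β := β + 1) (by linarith)
  rw [one_add_sq_rpow_neg_add_one, add_assoc, one_add_one_eq_two] at h1
  linear_combination (1 + T ^ 2)⁻¹ * h0 - h1

lemma tailIntegral_ratio_le {T : ℝ} (hT : T ≤ 0) (hβ : 1 / 2 < β) :
    (2 * β + 1 - 2 * (1 + T ^ 2)⁻¹) * tailIntegral T (β + 1)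
      ≤ (2 * β - 1) * (1 + T ^ 2)⁻¹ * tailIntegral T β := by
  have h0 := tailIntegral_recurrence T hβ
  have h1 := tailIntegral_recurrence T (β := β + 1) (by linarith)
  rw [one_add_sq_rpow_neg_add_one, add_assoc, one_add_one_eq_two] at h1
  have h2 := tailIntegral_add_one_le hT (β := β + 1) (by linarith)
  rw [add_assoc, one_add_one_eq_two] at h2
  linear_combination (2 * β + 2) * h2 + h1 - (1 + T ^ 2)⁻¹ * h0

end

lemma mul_sub_mul_le_of_le {k X P C : ℝ} (hk : 0 ≤ k) (hXP : X ≤ P) (hP : 2 * k * P ≤ C) :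
    X * (C - k * X) ≤ P * (C - k * P) := by
  nlinarith [mul_le_mul_of_nonneg_left hXP hk]

section

variable {N u : ℝ}

lemma large_u_bound (hN : 62 ≤ N) (hu : 77 / 100 ≤ u) (hu1 : u < 1) :
    2 * (N + 7) * ((N - 9) * u + (N - 8)) ^ 2 < 9 * (N + 3) * (N - 9) * (N - 10) * u := by
  obtain ⟨m, hm, rfl⟩ : ∃ m, 0 ≤ m ∧ N = m + 62 := ⟨N - 62, by linarith, by ring⟩
  have hv := sub_nonneg.2 hu
  have hw := (sub_pos.2 hu1).le
  nlinarith [mul_nonneg hm hm, mul_nonneg (mul_nonneg hm hm) hm, mul_nonneg hm hv,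
    mul_nonneg (mul_nonneg hm hm) hv, mul_pos (sub_pos.2 hu1) (sub_pos.2 hu1),
    mul_nonneg (mul_nonneg hm hm) hw, mul_nonneg hm hw]

lemma small_u_vertex (hN : 62 ≤ N) (hu : 0 ≤ u) (hu1 : u ≤ 77 / 100) :
    2 * (N - 7) * ((N - 8) * u) ≤ ((N - 9) * u + (N - 8)) * (N - 6 - 2 * u) := by
  obtain ⟨m, hm, rfl⟩ : ∃ m, 0 ≤ m ∧ N = m + 62 := ⟨N - 62, by linarith, by ring⟩
  have hv := sub_nonneg.2 hu1
  nlinarith [mul_nonneg hm hm, mul_nonneg hm hu, mul_nonneg hm hv, mul_nonneg hu hv,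
    mul_nonneg (mul_nonneg hm hm) hv, mul_nonneg (mul_nonneg hm hu) hv]

lemma small_u_bound (hN : 62 ≤ N) (hu : 0 < u) (hu1 : u ≤ 77 / 100) :
    8 * (N + 7) * (N - 7) * (N - 8)
        * ((N - 6 - 2 * u) * ((N - 9) * u + (N - 8)) - (N - 7) * (N - 8) * u)
      < 9 * (N + 3) * (N - 9) * (N - 10) * (N - 6 - 2 * u) ^ 2 := by
  obtain ⟨m, hm, rfl⟩ : ∃ m, 0 ≤ m ∧ N = m + 62 := ⟨N - 62, by linarith, by ring⟩
  have hv := sub_nonneg.2 hu1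
  have hm2 := mul_nonneg hm hm
  have hm3 := mul_nonneg hm2 hm
  nlinarith [mul_nonneg hm hu.le, mul_nonneg hm hv, mul_nonneg hu.le hv, mul_nonneg hm2 hv,
    mul_nonneg hm2 hu.le, mul_nonneg (mul_nonneg hm hu.le) hv, mul_nonneg hm3 hv,
    mul_nonneg hm3 hu.le, mul_nonneg (mul_nonneg hm2 hu.le) hv]

lemma quadratic_lt_of_ratio_le (hN : 62 ≤ N) (hu : 0 < u) (hu1 : u < 1) {x₀ x₁ : ℝ} (hx₁ : 0 < x₁)
    (hratio : (N - 6 - 2 * u) * x₀ ≤ (N - 8) * u * x₁) :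
    8 * (N + 7) * (N - 7) * (x₀ * (((N - 9) * u + (N - 8)) * x₁ - (N - 7) * x₀))
      < 9 * (N + 3) * (N - 9) * (N - 10) * u * x₁ ^ 2 := by
  have hx₁2 : 0 < x₁ ^ 2 := by positivity
  rcases le_or_gt u (77 / 100) with hsmall | hlarge
  · have hmono := mul_sub_mul_le_of_le (k := N - 7)
      (C := ((N - 9) * u + (N - 8)) * (N - 6 - 2 * u) * x₁) (by linarith) hratio
      (by nlinarith [small_u_vertex hN hu.le hsmall])
    have hG := mul_lt_mul_of_pos_right (small_u_bound hN hu hsmall) (mul_pos hu hx₁2)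
    refine lt_of_mul_lt_mul_left ?_ (sq_nonneg (N - 6 - 2 * u))
    have hk : 0 ≤ 8 * (N + 7) * (N - 7) := mul_nonneg (by linarith) (by linarith)
    linear_combination mul_le_mul_of_nonneg_left hmono hk + hG
  · have hG := mul_lt_mul_of_pos_right (large_u_bound hN hlarge.le hu1) hx₁2
    nlinarith [sq_nonneg (((N - 9) * u + (N - 8)) * x₁ - 2 * (N - 7) * x₀)]

end

lemma discriminant_pos_of_three_term {N u x₀ x₁ x₂ : ℝ} (hN : 62 ≤ N) (hu : 0 < u) (hu1 : u < 1)
    (hx₁ : 0 < x₁)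
    (hthree : u * (N - 10) * x₂ = ((N - 9) * u + (N - 8)) * x₁ - (N - 7) * x₀)
    (hratio : (N - 6 - 2 * u) * x₀ ≤ (N - 8) * u * x₁) :
    0 < 9 * x₁ ^ 2 - 8 * ((N + 7) * (N - 7) / ((N + 3) * (N - 9))) * (x₀ * x₂) := by
  have hden : 0 < (N + 3) * (N - 9) := by nlinarith
  have hscale : 0 < u * (N - 10) := mul_pos hu (by linarith)
  have key := quadratic_lt_of_ratio_le hN hu hu1 hx₁ hratio
  rw [← hthree] at key
  rw [sub_pos, mul_comm 8, mul_assoc, div_mul_eq_mul_div, div_lt_iff₀ hden]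
  nlinarith

/-- For `T < 0` and `n ≥ 62`, with
`c_q = ∫_0^∞ (1+(t−T)²)^{(5+2q−n)/2} dt` (`q = 0,1,2`), the discriminant quantity
`9c₁² − 8((n+7)(n−7)/((n+3)(n−9))) c₀c₂` is positive. -/
theorem discriminant_positive (T : ℝ) (hT : T < 0) (n : ℕ) (hn : 62 ≤ n)
    (c : ℕ → ℝ)
    (hc : ∀ m : ℕ, c m
      = ∫ t in Set.Ioi (0 : ℝ), (1 + (t - T) ^ 2) ^ ((5 + 2 * (m : ℝ) - (n : ℝ)) / 2)) :
    0 < 9 * c 1 ^ 2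
      - 8 * (((n : ℝ) + 7) * ((n : ℝ) - 7) / (((n : ℝ) + 3) * ((n : ℝ) - 9))) * (c 0 * c 2) := by
  have hN : (62 : ℝ) ≤ n := by exact_mod_cast hn
  set β : ℝ := ((n : ℝ) - 9) / 2 with hβ
  have hc_eq (m : ℕ) (γ : ℝ) (hγ : γ = ((n : ℝ) - 5 - 2 * m) / 2) : c m = tailIntegral T γ := by
    rw [hc m, tailIntegral, hγ]
    congr 1 with t
    ring_nf
  rw [hc_eq 0 (β + 2) (by push_cast; ring), hc_eq 1 (β + 1) (by push_cast; ring),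
    hc_eq 2 β (by push_cast; ring)]
  have hu : 0 < (1 + T ^ 2)⁻¹ := by positivity
  have hu1 : (1 + T ^ 2)⁻¹ < 1 := inv_lt_one_of_one_lt₀ (by nlinarith)
  have hthree := tailIntegral_three_term T (β := β) (by linarith)
  have hratio := tailIntegral_ratio_le hT.le (β := β + 1) (by linarith)
  rw [add_assoc, one_add_one_eq_two] at hratio
  exact discriminant_pos_of_three_term hN hu hu1 (tailIntegral_pos T (by linarith))
    (by linear_combination hthree) (by linear_combination hratio)
end

section
/- Let p be a real number with 0 < p ≤ 1. Then there exists a constant C > 0, depending only on p, such that for all real numbers u ≥ 0 and all real numbers w, v: | |u+w|^p (u+w) − |u+v|^p (u+v) − (p+1) u^p (w − v) | ≤ C ( |w|^p + |v|^p ) |w − v|. -/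
/-!
The map `f t = |t| ^ p * t` has derivative `(p + 1) * |t| ^ p`, and `t ↦ |t| ^ p` is `p`-Hölder
with constant `1` because `x ↦ x ^ p` is subadditive on `[0, ∞)` for `p ≤ 1`. The mean value
inequality applied to `f` minus its linearization at `u`, on the interval between `u + v` and
`u + w`, bounds the left-hand side by `(p + 1) * sup |t - u| ^ p * |w - v|`, and
`|t - u| ^ p ≤ (|w| + |v|) ^ p ≤ |w| ^ p + |v| ^ p` on that interval.
-/

open Real Set Filter Topology

namespace Real

variable {p : ℝ}

lemma abs_rpow_sub_abs_rpow_le (hp0 : 0 ≤ p) (hp1 : p ≤ 1) (a b : ℝ) :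
    |a| ^ p - |b| ^ p ≤ |a - b| ^ p := by
  have hab : |a| ≤ |b| + |a - b| := by linarith [abs_sub_abs_le_abs_sub a b]
  have := calc
    |a| ^ p ≤ (|b| + |a - b|) ^ p := rpow_le_rpow (abs_nonneg a) hab hp0
    _ ≤ |b| ^ p + |a - b| ^ p := rpow_add_le_add_rpow (abs_nonneg _) (abs_nonneg _) hp0 hp1
  linarith

lemma abs_abs_rpow_sub_abs_rpow_le (hp0 : 0 ≤ p) (hp1 : p ≤ 1) (a b : ℝ) :
    |(|a| ^ p - |b| ^ p)| ≤ |a - b| ^ p :=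
  abs_sub_le_iff.2 ⟨abs_rpow_sub_abs_rpow_le hp0 hp1 a b,
    abs_sub_comm a b ▸ abs_rpow_sub_abs_rpow_le hp0 hp1 b a⟩

lemma hasDerivAt_abs_rpow_mul_self_of_pos {x : ℝ} (hx : 0 < x) :
    HasDerivAt (fun t => |t| ^ p * t) ((p + 1) * |x| ^ p) x := by
  have h := hasDerivAt_rpow_const (p := p + 1) (Or.inl hx.ne')
  rw [add_sub_cancel_right] at h
  refine (h.congr_of_eventuallyEq ?_).congr_deriv (by rw [abs_of_pos hx])
  filter_upwards [eventually_gt_nhds hx] with t ht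
  rw [abs_of_pos ht, rpow_add_one ht.ne']

lemma hasDerivAt_abs_rpow_mul_self_of_neg {x : ℝ} (hx : x < 0) :
    HasDerivAt (fun t => |t| ^ p * t) ((p + 1) * |x| ^ p) x := by
  have h := ((hasDerivAt_abs_rpow_mul_self_of_pos (p := p) (neg_pos.2 hx)).comp x
    (hasDerivAt_neg x)).neg
  refine (h.congr_deriv (by simp)).congr_of_eventuallyEq (.of_forall fun t => ?_)
  simp

lemma hasDerivAt_abs_rpow_mul_self_zero (hp : 0 < p) :
    HasDerivAt (fun t : ℝ => |t| ^ p * t) 0 0 := by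
  rw [hasDerivAt_iff_tendsto_slope]
  have h : Tendsto (fun t : ℝ => |t| ^ p) (𝓝[≠] 0) (𝓝 0) := by
    have := (continuous_abs.rpow_const fun _ => Or.inr hp.le).tendsto (0 : ℝ)
    simpa [zero_rpow hp.ne'] using this.mono_left nhdsWithin_le_nhds
  refine h.congr' (eventually_nhdsWithin_of_forall fun t (ht : t ≠ 0) => ?_)
  simp [slope_def_field, ht]

lemma hasDerivAt_abs_rpow_mul_self (hp : 0 < p) (x : ℝ) :
    HasDerivAt (fun t => |t| ^ p * t) ((p + 1) * |x| ^ p) x := by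
  rcases lt_trichotomy x 0 with hx | rfl | hx
  · exact hasDerivAt_abs_rpow_mul_self_of_neg hx
  · simpa [zero_rpow hp.ne'] using hasDerivAt_abs_rpow_mul_self_zero hp
  · exact hasDerivAt_abs_rpow_mul_self_of_pos hx

end Real

lemma abs_sub_le_abs_add_abs_of_mem_uIcc {u v w t : ℝ} (ht : t ∈ uIcc (u + v) (u + w)) :
    |t - u| ≤ |w| + |v| := by
  rcases mem_uIcc.1 ht with ⟨h₁, h₂⟩ | ⟨h₁, h₂⟩ <;> rw [abs_le] <;> constructor <;>
    linarith [neg_abs_le v, neg_abs_le w, le_abs_self v, le_abs_self w, abs_nonneg v, abs_nonneg w]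

lemma Convex.abs_image_sub_sub_le_of_abs_hasDerivWithin_sub_le {f f' : ℝ → ℝ} {s : Set ℝ}
    {c C x y : ℝ} (hf : ∀ t ∈ s, HasDerivWithinAt f (f' t) s t) (bound : ∀ t ∈ s, |f' t - c| ≤ C)
    (hs : Convex ℝ s) (hx : x ∈ s) (hy : y ∈ s) :
    |f y - f x - c * (y - x)| ≤ C * |y - x| := by
  have hg : ∀ t ∈ s, HasDerivWithinAt (fun t => f t - c * t) (f' t - c) s t := fun t ht =>
    ((hf t ht).sub ((hasDerivWithinAt_id t s).const_mul c)).congr_deriv (by rw [mul_one])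
  have := hs.norm_image_sub_le_of_norm_hasDerivWithin_le hg bound hx hy
  simp only [Real.norm_eq_abs] at this
  convert this using 2
  ring

lemma abs_rpow_sub_rpow_le_of_mem_uIcc {p u v w t : ℝ} (hp0 : 0 ≤ p) (hp1 : p ≤ 1) (hu : 0 ≤ u)
    (ht : t ∈ uIcc (u + v) (u + w)) : |(|t| ^ p - u ^ p)| ≤ |w| ^ p + |v| ^ p :=
  calc |(|t| ^ p - u ^ p)| = |(|t| ^ p - |u| ^ p)| := by rw [abs_of_nonneg hu]
    _ ≤ |t - u| ^ p := abs_abs_rpow_sub_abs_rpow_le hp0 hp1 t u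
    _ ≤ (|w| + |v|) ^ p := rpow_le_rpow (abs_nonneg _) (abs_sub_le_abs_add_abs_of_mem_uIcc ht) hp0
    _ ≤ |w| ^ p + |v| ^ p := rpow_add_le_add_rpow (abs_nonneg _) (abs_nonneg _) hp0 hp1

/-- For `0 < p ≤ 1` there is a constant `C > 0` (depending only on `p`)
such that for all `u ≥ 0` and all `w, v ∈ ℝ`,
`| |u+w|^p (u+w) − |u+v|^p (u+v) − (p+1) u^p (w−v) | ≤ C (|w|^p + |v|^p) |w−v|`. -/
theorem pointwise_power_estimate (p : ℝ) (hp0 : 0 < p) (hp1 : p ≤ 1) :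
    ∃ C : ℝ, 0 < C ∧ ∀ u : ℝ, 0 ≤ u → ∀ w v : ℝ,
      |(|u + w| ^ p) * (u + w) - (|u + v| ^ p) * (u + v) - (p + 1) * u ^ p * (w - v)|
        ≤ C * (|w| ^ p + |v| ^ p) * |w - v| := by
  have hp : 0 < p + 1 := by linarith
  refine ⟨p + 1, hp, fun u hu w v => ?_⟩
  have derivative_bound : ∀ t ∈ uIcc (u + v) (u + w),
      |(p + 1) * |t| ^ p - (p + 1) * u ^ p| ≤ (p + 1) * (|w| ^ p + |v| ^ p) := fun t ht => by
    rw [← mul_sub, abs_mul, abs_of_pos hp]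
    exact mul_le_mul_of_nonneg_left (abs_rpow_sub_rpow_le_of_mem_uIcc hp0.le hp1 hu ht) hp.le
  have mean_value := (convex_uIcc (u + v) (u + w)).abs_image_sub_sub_le_of_abs_hasDerivWithin_sub_le
    (fun t _ => (hasDerivAt_abs_rpow_mul_self hp0 t).hasDerivWithinAt) derivative_bound
    left_mem_uIcc right_mem_uIcc
  simpa only [add_sub_add_left_eq_sub, mul_assoc] using mean_value
end
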